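/- arXiv:1010.2855 — 3 statements merged into one kernel-verified Lean document; each statement's English description precedes it below -/
import Mathlib

section
/- Type (VII) algebras satisfy the h.t.a. identities: Let a, b, c, d, e, f, k be real numbers with a·f − b·e = 0 and b·k + a·e = 0. On V = ℝ² with standard basis u = (1,0), v = (0,1), let · and * be the unique bilinear skew-symmetric operations with u·v = a·u + b·v and u*v = c·u + d·v, and let ⟨;,⟩ be the unique trilinear operation skew-symmetric in its last two arguments with ⟨u;u,v⟩ = e·u + f·v and ⟨v;u,v⟩ = k·u − e·v. Then (V, ·, *, ⟨;,⟩) satisfies all the hyporeductive triple algebra identities (2)–(13). -/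
/-- A (binary-binary-ternary) triple algebra: a real vector space with two
bilinear skew-symmetric binary operations `mul` (x·y), `star` (x*y) and a
trilinear operation `tri` (⟨x;y,z⟩) skew-symmetric in its last two arguments. -/
structure TripleAlg (V : Type*) [AddCommGroup V] [Module ℝ V] where
  mul : V → V → V
  star : V → V → V
  tri : V → V → V → V
  mul_add_left : ∀ x y z : V, mul (x + y) z = mul x z + mul y z
  mul_smul_left : ∀ (r : ℝ) (x y : V), mul (r • x) y = r • mul x y
  mul_skew : ∀ x y : V, mul x y = -mul y x
  star_add_left : ∀ x y z : V, star (x + y) z = star x z + star y z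
  star_smul_left : ∀ (r : ℝ) (x y : V), star (r • x) y = r • star x y
  star_skew : ∀ x y : V, star x y = -star y x
  tri_add_fst : ∀ x y z w : V, tri (x + y) z w = tri x z w + tri y z w
  tri_smul_fst : ∀ (r : ℝ) (x z w : V), tri (r • x) z w = r • tri x z w
  tri_add_snd : ∀ x y z w : V, tri x (y + z) w = tri x y w + tri x z w
  tri_smul_snd : ∀ (r : ℝ) (x y w : V), tri x (r • y) w = r • tri x y w
  tri_skew : ∀ x y z : V, tri x y z = -tri x z y

namespace TripleAlg

variable {V : Type*} [AddCommGroup V] [Module ℝ V]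

/-- The summand of identity (11), to be summed cyclically over the pairs
(ξ,η), (ζ,κ), (l,m). -/
def term11 (A : TripleAlg V) (ξ η ζ κ l m : V) : V :=
  A.tri (A.tri (A.mul ξ η) ζ κ + A.mul η (A.tri ξ ζ κ) - A.mul ξ (A.tri η ζ κ)) l m
    + A.tri (A.mul l m) (A.tri η ζ κ) ξ + A.mul m (A.tri l (A.tri η ζ κ) ξ)
    - A.mul l (A.tri m (A.tri η ζ κ) ξ)
    - (A.tri (A.mul l m) (A.tri ξ ζ κ) η + A.mul m (A.tri l (A.tri ξ ζ κ) η)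
        - A.mul l (A.tri m (A.tri ξ ζ κ) η))

/-- The summand of identity (12). -/
def term12 (A : TripleAlg V) (ξ η ζ κ l m : V) : V :=
  A.star (A.tri m (A.tri η ζ κ) ξ - A.tri m (A.tri ξ ζ κ) η) l
    + A.star (A.tri l (A.tri ξ ζ κ) η - A.tri l (A.tri η ζ κ) ξ) m

/-- The summand of identity (13). -/
def term13 (A : TripleAlg V) (θ ξ η ζ κ l m : V) : V :=
  A.tri θ (A.tri m (A.tri η ζ κ) ξ - A.tri m (A.tri ξ ζ κ) η) l
    + A.tri θ (A.tri l (A.tri ξ ζ κ) η - A.tri l (A.tri η ζ κ) ξ) m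

/-- The defining identities (2)–(13) of an (abstract) hyporeductive triple
algebra. -/
def IsHTA (A : TripleAlg V) : Prop :=
  -- (2)
  (∀ ξ η ζ : V,
    A.mul ξ (A.mul η ζ) - A.tri ξ η ζ + A.mul η (A.mul ζ ξ) - A.tri η ζ ξ
      + A.mul ζ (A.mul ξ η) - A.tri ζ ξ η = 0) ∧
  -- (3)
  (∀ ξ η ζ : V,
    A.star ζ (A.mul ξ η) + A.star ξ (A.mul η ζ) + A.star η (A.mul ζ ξ) = 0) ∧
  -- (4)
  (∀ θ ξ η ζ : V,
    A.tri θ ζ (A.mul ξ η) + A.tri θ ξ (A.mul η ζ) + A.tri θ η (A.mul ζ ξ) = 0) ∧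
  -- (5)
  (∀ ξ η ζ κ : V,
    A.mul κ (A.tri ζ ξ η) - A.mul ζ (A.tri κ ξ η) + A.tri (A.mul ζ κ) ξ η =
      A.tri (A.star ξ η) ζ κ - A.tri (A.star ζ κ) ξ η
        + A.star ζ (A.tri κ ξ η) - A.star κ (A.tri ζ ξ η)
        + A.star (A.star ξ η) (A.star ζ κ) + A.mul (A.star ξ η) (A.star ζ κ)) ∧
  -- (6)
  (∀ ξ η ζ κ χ : V,
    A.mul χ (A.mul κ (A.tri ζ ξ η) - A.mul ζ (A.tri κ ξ η) + A.tri (A.mul ζ κ) ξ η)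
      + A.tri (A.tri χ ξ η) ζ κ - A.tri (A.tri χ ζ κ) ξ η
      + A.tri χ ζ (A.tri κ ξ η) - A.tri χ κ (A.tri ζ ξ η) = 0) ∧
  -- (7)
  (∀ ξ η ζ κ χ : V,
    A.star χ (A.mul κ (A.tri ζ ξ η) - A.mul ζ (A.tri κ ξ η) + A.tri (A.mul ζ κ) ξ η) = 0) ∧
  -- (8)
  (∀ ξ η ζ κ θ χ : V,
    A.tri θ χ (A.mul κ (A.tri ζ ξ η) - A.mul ζ (A.tri κ ξ η) + A.tri (A.mul ζ κ) ξ η) = 0) ∧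
  -- (9)
  (∀ ξ η ζ κ : V,
    A.mul κ (A.tri ζ ξ η) - A.mul ζ (A.tri κ ξ η) + A.tri (A.mul ζ κ) ξ η
      + A.mul η (A.tri ξ ζ κ) - A.mul ξ (A.tri η ζ κ) + A.tri (A.mul ξ η) ζ κ = 0) ∧
  -- (10)
  (∀ ξ η ζ κ : V,
    A.star ζ (A.tri κ ξ η) - A.star κ (A.tri ζ ξ η)
      + A.star ξ (A.tri η ζ κ) - A.star η (A.tri ξ ζ κ) = 0) ∧
  -- (11)
  (∀ ξ η ζ κ l m : V,
    A.term11 ξ η ζ κ l m + A.term11 ζ κ l m ξ η + A.term11 l m ξ η ζ κ = 0) ∧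
  -- (12)
  (∀ ξ η ζ κ l m : V,
    A.term12 ξ η ζ κ l m + A.term12 ζ κ l m ξ η + A.term12 l m ξ η ζ κ = 0) ∧
  -- (13)
  (∀ θ ξ η ζ κ l m : V,
    A.term13 θ ξ η ζ κ l m + A.term13 θ ζ κ l m ξ η + A.term13 θ l m ξ η ζ κ = 0)

/-- The expression J(u,v) = u*⟨v;u,v⟩ − v*⟨u;u,v⟩. -/
def J (A : TripleAlg V) (u v : V) : V :=
  A.star u (A.tri v u v) - A.star v (A.tri u u v)

end TripleAlg


namespace TripleAlg
variable {V : Type*} [AddCommGroup V] [Module ℝ V] (A : TripleAlg V)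

lemma mul_add_right' (x y z : V) : A.mul x (y + z) = A.mul x y + A.mul x z := by
  rw [A.mul_skew x (y + z), A.mul_add_left, A.mul_skew y x, A.mul_skew z x]; abel

lemma mul_smul_right' (r : ℝ) (x y : V) : A.mul x (r • y) = r • A.mul x y := by
  rw [A.mul_skew x (r • y), A.mul_smul_left, A.mul_skew y x, smul_neg, neg_neg]

lemma star_add_right' (x y z : V) : A.star x (y + z) = A.star x y + A.star x z := by
  rw [A.star_skew x (y + z), A.star_add_left, A.star_skew y x, A.star_skew z x]; abel

lemma star_smul_right' (r : ℝ) (x y : V) : A.star x (r • y) = r • A.star x y := by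
  rw [A.star_skew x (r • y), A.star_smul_left, A.star_skew y x, smul_neg, neg_neg]

lemma tri_add_thd' (x y z w : V) : A.tri x y (z + w) = A.tri x y z + A.tri x y w := by
  rw [A.tri_skew x y (z + w), A.tri_add_snd, A.tri_skew x z y, A.tri_skew x w y]; abel

lemma tri_smul_thd' (r : ℝ) (x y z : V) : A.tri x y (r • z) = r • A.tri x y z := by
  rw [A.tri_skew x y (r • z), A.tri_smul_snd, A.tri_skew x z y, smul_neg, neg_neg]

lemma mul_self' (x : V) : A.mul x x = 0 := by
  have h := A.mul_skew x x
  have h2 : (2:ℝ) • A.mul x x = 0 := by rw [two_smul]; nth_rewrite 1 [h]; abel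
  simpa using (smul_eq_zero.mp h2).resolve_left (by norm_num)

lemma star_self' (x : V) : A.star x x = 0 := by
  have h := A.star_skew x x
  have h2 : (2:ℝ) • A.star x x = 0 := by rw [two_smul]; nth_rewrite 1 [h]; abel
  simpa using (smul_eq_zero.mp h2).resolve_left (by norm_num)

lemma tri_self' (x y : V) : A.tri x y y = 0 := by
  have h := A.tri_skew x y y
  have h2 : (2:ℝ) • A.tri x y y = 0 := by rw [two_smul]; nth_rewrite 1 [h]; abel
  simpa using (smul_eq_zero.mp h2).resolve_left (by norm_num)

end TripleAlg

/-- Type (VII) algebras satisfy the h.t.a. identities: on ℝ² with u = (1,0),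
v = (0,1), the operations determined by u·v = a•u + b•v, u*v = c•u + d•v,
⟨u;u,v⟩ = e•u + f•v, ⟨v;u,v⟩ = k•u − e•v with a·f − b·e = 0 and
b·k + a·e = 0 satisfy identities (2)–(13). -/
theorem typeVII_isHTA (a b c d e f k : ℝ)
    (hconstr1 : a * f - b * e = 0) (hconstr2 : b * k + a * e = 0)
    (A : TripleAlg (ℝ × ℝ))
    (hmul : A.mul ((1 : ℝ), (0 : ℝ)) ((0 : ℝ), (1 : ℝ))
      = a • ((1 : ℝ), (0 : ℝ)) + b • ((0 : ℝ), (1 : ℝ)))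
    (hstar : A.star ((1 : ℝ), (0 : ℝ)) ((0 : ℝ), (1 : ℝ))
      = c • ((1 : ℝ), (0 : ℝ)) + d • ((0 : ℝ), (1 : ℝ)))
    (htu : A.tri ((1 : ℝ), (0 : ℝ)) ((1 : ℝ), (0 : ℝ)) ((0 : ℝ), (1 : ℝ))
      = e • ((1 : ℝ), (0 : ℝ)) + f • ((0 : ℝ), (1 : ℝ)))
    (htv : A.tri ((0 : ℝ), (1 : ℝ)) ((1 : ℝ), (0 : ℝ)) ((0 : ℝ), (1 : ℝ))
      = k • ((1 : ℝ), (0 : ℝ)) - e • ((0 : ℝ), (1 : ℝ))) :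
    A.IsHTA := by
  classical
  have hdec : ∀ x : ℝ × ℝ, x = x.1 • ((1 : ℝ), (0 : ℝ)) + x.2 • ((0 : ℝ), (1 : ℝ)) := by
    intro x; simp [Prod.ext_iff]
  -- coordinate formula for mul
  have hm : ∀ x y : ℝ × ℝ, A.mul x y
      = (((x.1 * y.2 - x.2 * y.1) * a, (x.1 * y.2 - x.2 * y.1) * b) : ℝ × ℝ) := by
    intro x y
    calc A.mul x y = A.mul (x.1 • ((1:ℝ),(0:ℝ)) + x.2 • ((0:ℝ),(1:ℝ)))
          (y.1 • ((1:ℝ),(0:ℝ)) + y.2 • ((0:ℝ),(1:ℝ))) := by rw [← hdec, ← hdec]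
      _ = _ := by
        simp only [A.mul_add_left, A.mul_add_right', A.mul_smul_left, A.mul_smul_right',
          A.mul_self', A.mul_skew ((0:ℝ),(1:ℝ)) ((1:ℝ),(0:ℝ)), hmul]
        simp [Prod.ext_iff]
        constructor <;> ring
  have hs : ∀ x y : ℝ × ℝ, A.star x y
      = (((x.1 * y.2 - x.2 * y.1) * c, (x.1 * y.2 - x.2 * y.1) * d) : ℝ × ℝ) := by
    intro x y
    calc A.star x y = A.star (x.1 • ((1:ℝ),(0:ℝ)) + x.2 • ((0:ℝ),(1:ℝ)))
          (y.1 • ((1:ℝ),(0:ℝ)) + y.2 • ((0:ℝ),(1:ℝ))) := by rw [← hdec, ← hdec]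
      _ = _ := by
        simp only [A.star_add_left, A.star_add_right', A.star_smul_left, A.star_smul_right',
          A.star_self', A.star_skew ((0:ℝ),(1:ℝ)) ((1:ℝ),(0:ℝ)), hstar]
        simp [Prod.ext_iff]
        constructor <;> ring
  have ht : ∀ x y z : ℝ × ℝ, A.tri x y z
      = (((y.1 * z.2 - y.2 * z.1) * (x.1 * e + x.2 * k),
          (y.1 * z.2 - y.2 * z.1) * (x.1 * f - x.2 * e)) : ℝ × ℝ) := by
    intro x y z
    calc A.tri x y z = A.tri (x.1 • ((1:ℝ),(0:ℝ)) + x.2 • ((0:ℝ),(1:ℝ)))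
          (y.1 • ((1:ℝ),(0:ℝ)) + y.2 • ((0:ℝ),(1:ℝ)))
          (z.1 • ((1:ℝ),(0:ℝ)) + z.2 • ((0:ℝ),(1:ℝ))) := by rw [← hdec, ← hdec, ← hdec]
      _ = _ := by
        simp only [A.tri_add_fst, A.tri_add_snd, A.tri_add_thd', A.tri_smul_fst,
          A.tri_smul_snd, A.tri_smul_thd', A.tri_self',
          A.tri_skew ((1:ℝ),(0:ℝ)) ((0:ℝ),(1:ℝ)) ((1:ℝ),(0:ℝ)),
          A.tri_skew ((0:ℝ),(1:ℝ)) ((0:ℝ),(1:ℝ)) ((1:ℝ),(0:ℝ)), htu, htv]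
        simp [Prod.ext_iff]
        constructor <;> ring
  unfold TripleAlg.IsHTA
  refine ⟨?_, ?_, ?_, ?_, ?_, ?_, ?_, ?_, ?_, ?_, ?_, ?_⟩
  · -- identity (2)
    intro x y z
    simp only [ hm, hs, ht]
    refine Prod.ext_iff.mpr ⟨?_, ?_⟩ <;>
      simp only [Prod.fst_add, Prod.snd_add, Prod.fst_sub, Prod.snd_sub,
        Prod.smul_fst, Prod.smul_snd, Prod.fst_zero, Prod.snd_zero, smul_eq_mul]
    · linear_combination (0) * hconstr1 + (0) * hconstr2
    · linear_combination (0) * hconstr1 + (0) * hconstr2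
  · -- identity (3)
    intro x y z
    simp only [ hm, hs, ht]
    refine Prod.ext_iff.mpr ⟨?_, ?_⟩ <;>
      simp only [Prod.fst_add, Prod.snd_add, Prod.fst_sub, Prod.snd_sub,
        Prod.smul_fst, Prod.smul_snd, Prod.fst_zero, Prod.snd_zero, smul_eq_mul]
    · linear_combination (0) * hconstr1 + (0) * hconstr2
    · linear_combination (0) * hconstr1 + (0) * hconstr2
  · -- identity (4)
    intro x y z w
    simp only [ hm, hs, ht]
    refine Prod.ext_iff.mpr ⟨?_, ?_⟩ <;>
      simp only [Prod.fst_add, Prod.snd_add, Prod.fst_sub, Prod.snd_sub,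
        Prod.smul_fst, Prod.smul_snd, Prod.fst_zero, Prod.snd_zero, smul_eq_mul]
    · linear_combination (0) * hconstr1 + (0) * hconstr2
    · linear_combination (0) * hconstr1 + (0) * hconstr2
  · -- identity (5)
    intro x y z w
    simp only [ hm, hs, ht]
    refine Prod.ext_iff.mpr ⟨?_, ?_⟩ <;>
      simp only [Prod.fst_add, Prod.snd_add, Prod.fst_sub, Prod.snd_sub,
        Prod.smul_fst, Prod.smul_snd, Prod.fst_zero, Prod.snd_zero, smul_eq_mul]
    · linear_combination (0) * hconstr1 + (x.1*y.2*z.1*w.2 + (-1)*x.1*y.2*z.2*w.1 + (-1)*x.2*y.1*z.1*w.2 + x.2*y.1*z.2*w.1) * hconstr2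
    · linear_combination (x.1*y.2*z.1*w.2 + (-1)*x.1*y.2*z.2*w.1 + (-1)*x.2*y.1*z.1*w.2 + x.2*y.1*z.2*w.1) * hconstr1 + (0) * hconstr2
  · -- identity (6)
    intro x y z w t
    simp only [ hm, hs, ht]
    refine Prod.ext_iff.mpr ⟨?_, ?_⟩ <;>
      simp only [Prod.fst_add, Prod.snd_add, Prod.fst_sub, Prod.snd_sub,
        Prod.smul_fst, Prod.smul_snd, Prod.fst_zero, Prod.snd_zero, smul_eq_mul]
    · linear_combination (a*x.1*y.2*z.1*w.2*t.1 + (-1)*a*x.1*y.2*z.2*w.1*t.1 + (-1)*a*x.2*y.1*z.1*w.2*t.1 + a*x.2*y.1*z.2*w.1*t.1) * hconstr1 + ((-1)*a*x.1*y.2*z.1*w.2*t.2 + a*x.1*y.2*z.2*w.1*t.2 + a*x.2*y.1*z.1*w.2*t.2 + (-1)*a*x.2*y.1*z.2*w.1*t.2) * hconstr2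
    · linear_combination (b*x.1*y.2*z.1*w.2*t.1 + (-1)*b*x.1*y.2*z.2*w.1*t.1 + (-1)*b*x.2*y.1*z.1*w.2*t.1 + b*x.2*y.1*z.2*w.1*t.1) * hconstr1 + ((-1)*b*x.1*y.2*z.1*w.2*t.2 + b*x.1*y.2*z.2*w.1*t.2 + b*x.2*y.1*z.1*w.2*t.2 + (-1)*b*x.2*y.1*z.2*w.1*t.2) * hconstr2
  · -- identity (7)
    intro x y z w t
    simp only [ hm, hs, ht]
    refine Prod.ext_iff.mpr ⟨?_, ?_⟩ <;>
      simp only [Prod.fst_add, Prod.snd_add, Prod.fst_sub, Prod.snd_sub,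
        Prod.smul_fst, Prod.smul_snd, Prod.fst_zero, Prod.snd_zero, smul_eq_mul]
    · linear_combination (c*x.1*y.2*z.1*w.2*t.1 + (-1)*c*x.1*y.2*z.2*w.1*t.1 + (-1)*c*x.2*y.1*z.1*w.2*t.1 + c*x.2*y.1*z.2*w.1*t.1) * hconstr1 + ((-1)*c*x.1*y.2*z.1*w.2*t.2 + c*x.1*y.2*z.2*w.1*t.2 + c*x.2*y.1*z.1*w.2*t.2 + (-1)*c*x.2*y.1*z.2*w.1*t.2) * hconstr2
    · linear_combination (d*x.1*y.2*z.1*w.2*t.1 + (-1)*d*x.1*y.2*z.2*w.1*t.1 + (-1)*d*x.2*y.1*z.1*w.2*t.1 + d*x.2*y.1*z.2*w.1*t.1) * hconstr1 + ((-1)*d*x.1*y.2*z.1*w.2*t.2 + d*x.1*y.2*z.2*w.1*t.2 + d*x.2*y.1*z.1*w.2*t.2 + (-1)*d*x.2*y.1*z.2*w.1*t.2) * hconstr2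
  · -- identity (8)
    intro x y z w t l
    simp only [ hm, hs, ht]
    refine Prod.ext_iff.mpr ⟨?_, ?_⟩ <;>
      simp only [Prod.fst_add, Prod.snd_add, Prod.fst_sub, Prod.snd_sub,
        Prod.smul_fst, Prod.smul_snd, Prod.fst_zero, Prod.snd_zero, smul_eq_mul]
    · linear_combination (e*x.1*y.2*z.1*w.2*t.1*l.1 + (-1)*e*x.1*y.2*z.2*w.1*t.1*l.1 + (-1)*e*x.2*y.1*z.1*w.2*t.1*l.1 + e*x.2*y.1*z.2*w.1*t.1*l.1 + k*x.1*y.2*z.1*w.2*t.2*l.1 + (-1)*k*x.1*y.2*z.2*w.1*t.2*l.1 + (-1)*k*x.2*y.1*z.1*w.2*t.2*l.1 + k*x.2*y.1*z.2*w.1*t.2*l.1) * hconstr1 + ((-1)*e*x.1*y.2*z.1*w.2*t.1*l.2 + e*x.1*y.2*z.2*w.1*t.1*l.2 + e*x.2*y.1*z.1*w.2*t.1*l.2 + (-1)*e*x.2*y.1*z.2*w.1*t.1*l.2 + (-1)*k*x.1*y.2*z.1*w.2*t.2*l.2 + k*x.1*y.2*z.2*w.1*t.2*l.2 + k*x.2*y.1*z.1*w.2*t.2*l.2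 + (-1)*k*x.2*y.1*z.2*w.1*t.2*l.2) * hconstr2
    · linear_combination (f*x.1*y.2*z.1*w.2*t.1*l.1 + (-1)*f*x.1*y.2*z.2*w.1*t.1*l.1 + (-1)*f*x.2*y.1*z.1*w.2*t.1*l.1 + f*x.2*y.1*z.2*w.1*t.1*l.1 + (-1)*e*x.1*y.2*z.1*w.2*t.2*l.1 + e*x.1*y.2*z.2*w.1*t.2*l.1 + e*x.2*y.1*z.1*w.2*t.2*l.1 + (-1)*e*x.2*y.1*z.2*w.1*t.2*l.1) * hconstr1 + ((-1)*f*x.1*y.2*z.1*w.2*t.1*l.2 + f*x.1*y.2*z.2*w.1*t.1*l.2 + f*x.2*y.1*z.1*w.2*t.1*l.2 + (-1)*f*x.2*y.1*z.2*w.1*t.1*l.2 + e*x.1*y.2*z.1*w.2*t.2*l.2 + (-1)*e*x.1*y.2*z.2*w.1*t.2*l.2 + (-1)*e*x.2*y.1*z.1*w.2*t.2*l.2 + e*x.2*y.1*z.2*w.1*t.2*l.2) * hconstr2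
  · -- identity (9)
    intro x y z w
    simp only [ hm, hs, ht]
    refine Prod.ext_iff.mpr ⟨?_, ?_⟩ <;>
      simp only [Prod.fst_add, Prod.snd_add, Prod.fst_sub, Prod.snd_sub,
        Prod.smul_fst, Prod.smul_snd, Prod.fst_zero, Prod.snd_zero, smul_eq_mul]
    · linear_combination (0) * hconstr1 + (2*x.1*y.2*z.1*w.2 + (-2)*x.1*y.2*z.2*w.1 + (-2)*x.2*y.1*z.1*w.2 + 2*x.2*y.1*z.2*w.1) * hconstr2
    · linear_combination (2*x.1*y.2*z.1*w.2 + (-2)*x.1*y.2*z.2*w.1 + (-2)*x.2*y.1*z.1*w.2 + 2*x.2*y.1*z.2*w.1) * hconstr1 + (0) * hconstr2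
  · -- identity (10)
    intro x y z w
    simp only [ hm, hs, ht]
    refine Prod.ext_iff.mpr ⟨?_, ?_⟩ <;>
      simp only [Prod.fst_add, Prod.snd_add, Prod.fst_sub, Prod.snd_sub,
        Prod.smul_fst, Prod.smul_snd, Prod.fst_zero, Prod.snd_zero, smul_eq_mul]
    · linear_combination (0) * hconstr1 + (0) * hconstr2
    · linear_combination (0) * hconstr1 + (0) * hconstr2
  · -- identity (11)
    intro x y z w l m
    simp only [ TripleAlg.term11, TripleAlg.term12, TripleAlg.term13, hm, hs, ht]
    refine Prod.ext_iff.mpr ⟨?_, ?_⟩ <;>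
      simp only [Prod.fst_add, Prod.snd_add, Prod.fst_sub, Prod.snd_sub,
        Prod.smul_fst, Prod.smul_snd, Prod.fst_zero, Prod.snd_zero, smul_eq_mul]
    · linear_combination (3*k*x.1*y.2*z.1*w.2*l.1*m.2 + (-3)*k*x.1*y.2*z.1*w.2*l.2*m.1 + (-3)*k*x.1*y.2*z.2*w.1*l.1*m.2 + 3*k*x.1*y.2*z.2*w.1*l.2*m.1 + (-3)*k*x.2*y.1*z.1*w.2*l.1*m.2 + 3*k*x.2*y.1*z.1*w.2*l.2*m.1 + 3*k*x.2*y.1*z.2*w.1*l.1*m.2 + (-3)*k*x.2*y.1*z.2*w.1*l.2*m.1) * hconstr1 + (3*e*x.1*y.2*z.1*w.2*l.1*m.2 + (-3)*e*x.1*y.2*z.1*w.2*l.2*m.1 + (-3)*e*x.1*y.2*z.2*w.1*l.1*m.2 + 3*e*x.1*y.2*z.2*w.1*l.2*m.1 + (-3)*e*x.2*y.1*z.1*w.2*l.1*m.2 + 3*e*x.2*y.1*z.1*w.2*l.2*m.1 + 3*e*x.2*y.1*z.2*w.1*l.1*m.2 + (-3)*e*x.2*y.1*z.2*w.1*l.2*m.1)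 * hconstr2
    · linear_combination ((-3)*e*x.1*y.2*z.1*w.2*l.1*m.2 + 3*e*x.1*y.2*z.1*w.2*l.2*m.1 + 3*e*x.1*y.2*z.2*w.1*l.1*m.2 + (-3)*e*x.1*y.2*z.2*w.1*l.2*m.1 + 3*e*x.2*y.1*z.1*w.2*l.1*m.2 + (-3)*e*x.2*y.1*z.1*w.2*l.2*m.1 + (-3)*e*x.2*y.1*z.2*w.1*l.1*m.2 + 3*e*x.2*y.1*z.2*w.1*l.2*m.1) * hconstr1 + (3*f*x.1*y.2*z.1*w.2*l.1*m.2 + (-3)*f*x.1*y.2*z.1*w.2*l.2*m.1 + (-3)*f*x.1*y.2*z.2*w.1*l.1*m.2 + 3*f*x.1*y.2*z.2*w.1*l.2*m.1 + (-3)*f*x.2*y.1*z.1*w.2*l.1*m.2 + 3*f*x.2*y.1*z.1*w.2*l.2*m.1 + 3*f*x.2*y.1*z.2*w.1*l.1*m.2 + (-3)*f*x.2*y.1*z.2*w.1*l.2*m.1) * hconstr2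
  · -- identity (12)
    intro x y z w l m
    simp only [ TripleAlg.term11, TripleAlg.term12, TripleAlg.term13, hm, hs, ht]
    refine Prod.ext_iff.mpr ⟨?_, ?_⟩ <;>
      simp only [Prod.fst_add, Prod.snd_add, Prod.fst_sub, Prod.snd_sub,
        Prod.smul_fst, Prod.smul_snd, Prod.fst_zero, Prod.snd_zero, smul_eq_mul]
    · linear_combination (0) * hconstr1 + (0) * hconstr2
    · linear_combination (0) * hconstr1 + (0) * hconstr2
  · -- identity (13)
    intro x y z w t l m
    simp only [ TripleAlg.term11, TripleAlg.term12, TripleAlg.term13, hm, hs, ht]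
    refine Prod.ext_iff.mpr ⟨?_, ?_⟩ <;>
      simp only [Prod.fst_add, Prod.snd_add, Prod.fst_sub, Prod.snd_sub,
        Prod.smul_fst, Prod.smul_snd, Prod.fst_zero, Prod.snd_zero, smul_eq_mul]
    · linear_combination (0) * hconstr1 + (0) * hconstr2
    · linear_combination (0) * hconstr1 + (0) * hconstr2
end

section
/- Type (VIII) algebras satisfy the h.t.a. identities: Let a, b, c, d be arbitrary real numbers. On V = ℝ² with standard basis u = (1,0), v = (0,1), let · and * be the unique bilinear skew-symmetric operations with u·v = a·u + b·v and u*v = c·u + d·v, and let ⟨;,⟩ be the identically zero trilinear operation. Then (V, ·, *, ⟨;,⟩) satisfies all the hyporeductive triple algebra identities (2)–(13). -/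
/-- Type (VIII) algebras satisfy the h.t.a. identities: on ℝ² with u = (1,0),
v = (0,1), the operations determined by u·v = a•u + b•v, u*v = c•u + d•v and
the identically zero ternary operation satisfy identities (2)–(13). -/
theorem typeVIII_isHTA (a b c d : ℝ) (A : TripleAlg (ℝ × ℝ))
    (hmul : A.mul ((1 : ℝ), (0 : ℝ)) ((0 : ℝ), (1 : ℝ))
      = a • ((1 : ℝ), (0 : ℝ)) + b • ((0 : ℝ), (1 : ℝ)))
    (hstar : A.star ((1 : ℝ), (0 : ℝ)) ((0 : ℝ), (1 : ℝ))
      = c • ((1 : ℝ), (0 : ℝ)) + d • ((0 : ℝ), (1 : ℝ)))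
    (htri : ∀ x y z : ℝ × ℝ, A.tri x y z = 0) :
    A.IsHTA := by
  -- basic consequences of bilinearity/skewness
  have hmul0 : ∀ x : ℝ × ℝ, A.mul 0 x = 0 := fun x => by
    simpa using A.mul_smul_left 0 0 x
  have hmul0' : ∀ x : ℝ × ℝ, A.mul x 0 = 0 := fun x => by
    rw [A.mul_skew, hmul0, neg_zero]
  have hstar0 : ∀ x : ℝ × ℝ, A.star 0 x = 0 := fun x => by
    simpa using A.star_smul_left 0 0 x
  have hstar0' : ∀ x : ℝ × ℝ, A.star x 0 = 0 := fun x => by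
    rw [A.star_skew, hstar0, neg_zero]
  have hmar : ∀ x y z : ℝ × ℝ, A.mul x (y + z) = A.mul x y + A.mul x z := by
    intro x y z
    rw [A.mul_skew, A.mul_add_left, neg_add, ← A.mul_skew, ← A.mul_skew]
  have hmsr : ∀ (r : ℝ) (x y : ℝ × ℝ), A.mul x (r • y) = r • A.mul x y := by
    intro r x y
    rw [A.mul_skew, A.mul_smul_left, ← smul_neg, ← A.mul_skew]
  have hsar : ∀ x y z : ℝ × ℝ, A.star x (y + z) = A.star x y + A.star x z := by
    intro x y z
    rw [A.star_skew, A.star_add_left, neg_add, ← A.star_skew, ← A.star_skew]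
  have hssr : ∀ (r : ℝ) (x y : ℝ × ℝ), A.star x (r • y) = r • A.star x y := by
    intro r x y
    rw [A.star_skew, A.star_smul_left, ← smul_neg, ← A.star_skew]
  have self0 : ∀ X : ℝ × ℝ, X = -X → X = 0 := by
    intro X h
    have h2 : (2 : ℝ) • X = 0 := by
      rw [two_smul]; nth_rewrite 1 [h]; exact neg_add_cancel X
    have h3 := congrArg (fun y : ℝ × ℝ => (2⁻¹ : ℝ) • y) h2
    simpa [smul_smul] using h3
  have huu : A.mul ((1 : ℝ), (0 : ℝ)) ((1 : ℝ), (0 : ℝ)) = 0 :=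
    self0 _ (A.mul_skew _ _)
  have hvv : A.mul ((0 : ℝ), (1 : ℝ)) ((0 : ℝ), (1 : ℝ)) = 0 :=
    self0 _ (A.mul_skew _ _)
  have hsuu : A.star ((1 : ℝ), (0 : ℝ)) ((1 : ℝ), (0 : ℝ)) = 0 :=
    self0 _ (A.star_skew _ _)
  have hsvv : A.star ((0 : ℝ), (1 : ℝ)) ((0 : ℝ), (1 : ℝ)) = 0 :=
    self0 _ (A.star_skew _ _)
  have hvu : A.mul ((0 : ℝ), (1 : ℝ)) ((1 : ℝ), (0 : ℝ))
      = -(a • ((1 : ℝ), (0 : ℝ)) + b • ((0 : ℝ), (1 : ℝ))) := by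
    rw [A.mul_skew, hmul]
  have hsvu : A.star ((0 : ℝ), (1 : ℝ)) ((1 : ℝ), (0 : ℝ))
      = -(c • ((1 : ℝ), (0 : ℝ)) + d • ((0 : ℝ), (1 : ℝ))) := by
    rw [A.star_skew, hstar]
  have hdec : ∀ x : ℝ × ℝ, x = x.1 • ((1 : ℝ), (0 : ℝ)) + x.2 • ((0 : ℝ), (1 : ℝ)) := by
    intro x; ext <;> simp
  -- closed formulas
  have hmf : ∀ x y : ℝ × ℝ,
      A.mul x y = (x.1 * y.2 - x.2 * y.1) • ((a : ℝ), (b : ℝ)) := by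
    intro x y
    conv_lhs => rw [hdec x, hdec y]
    simp only [A.mul_add_left, hmar, A.mul_smul_left, hmsr, huu, hvv, hmul, hvu,
      smul_zero, smul_add, smul_neg, smul_smul]
    ext <;> simp <;> ring
  have hsf : ∀ x y : ℝ × ℝ,
      A.star x y = (x.1 * y.2 - x.2 * y.1) • ((c : ℝ), (d : ℝ)) := by
    intro x y
    conv_lhs => rw [hdec x, hdec y]
    simp only [A.star_add_left, hsar, A.star_smul_left, hssr, hsuu, hsvv, hstar, hsvu,
      smul_zero, smul_add, smul_neg, smul_smul]
    ext <;> simp <;> ring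
  refine ⟨?_, ?_, ?_, ?_, ?_, ?_, ?_, ?_, ?_, ?_, ?_, ?_⟩
  · intro ξ η ζ
    simp only [htri, sub_zero, hmf]
    ext <;> simp <;> ring
  · intro ξ η ζ
    simp only [hmf, hsf]
    ext <;> simp <;> ring
  · intro θ ξ η ζ
    simp only [htri]; abel
  · intro ξ η ζ κ
    simp only [htri, hmul0', hstar0', hmf, hsf]
    ext <;> simp <;> ring
  · intro ξ η ζ κ χ
    simp only [htri, hmul0', hstar0', sub_zero, add_zero, zero_sub, neg_zero]
  · intro ξ η ζ κ χ
    simp only [htri, hmul0', hstar0', sub_zero, add_zero, zero_sub, neg_zero]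
  · intro ξ η ζ κ θ χ
    simp only [htri]
  · intro ξ η ζ κ
    simp only [htri, hmul0', hstar0', sub_zero, add_zero, zero_sub, neg_zero]
  · intro ξ η ζ κ
    simp only [htri, hmul0', hstar0', sub_zero, add_zero, zero_sub, neg_zero]
  · intro ξ η ζ κ l m
    simp only [TripleAlg.term11, htri, hmul0', sub_zero, add_zero, zero_sub, neg_zero]
  · intro ξ η ζ κ l m
    simp only [TripleAlg.term12, htri, hstar0', sub_zero, add_zero, zero_sub, neg_zero,
      sub_self, hstar0]
  · intro θ ξ η ζ κ l m
    simp only [TripleAlg.term13, htri]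
    abel
end

section
/- Type (VI) algebras satisfy the h.t.a. identities: Let a, c, d, k be real numbers. On V = ℝ² with standard basis u = (1,0), v = (0,1), let · and * be the unique bilinear skew-symmetric operations with u·v = a·u and u*v = c·u + d·v, and let ⟨;,⟩ be the unique trilinear operation skew-symmetric in its last two arguments with ⟨u;u,v⟩ = 0 and ⟨v;u,v⟩ = k·u. Then (V, ·, *, ⟨;,⟩) satisfies all the hyporeductive triple algebra identities (2)–(13). -/
/-- Type (VI) algebras satisfy the h.t.a. identities: on ℝ² with u = (1,0),
v = (0,1), the operations determined by u·v = a•u, u*v = c•u + d•v,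
⟨u;u,v⟩ = 0, ⟨v;u,v⟩ = k•u satisfy identities (2)–(13). -/
theorem typeVI_isHTA (a c d k : ℝ) (A : TripleAlg (ℝ × ℝ))
    (hmul : A.mul ((1 : ℝ), (0 : ℝ)) ((0 : ℝ), (1 : ℝ)) = a • ((1 : ℝ), (0 : ℝ)))
    (hstar : A.star ((1 : ℝ), (0 : ℝ)) ((0 : ℝ), (1 : ℝ))
      = c • ((1 : ℝ), (0 : ℝ)) + d • ((0 : ℝ), (1 : ℝ)))
    (htu : A.tri ((1 : ℝ), (0 : ℝ)) ((1 : ℝ), (0 : ℝ)) ((0 : ℝ), (1 : ℝ)) = 0)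
    (htv : A.tri ((0 : ℝ), (1 : ℝ)) ((1 : ℝ), (0 : ℝ)) ((0 : ℝ), (1 : ℝ))
      = k • ((1 : ℝ), (0 : ℝ))) :
    A.IsHTA := by
  classical
  set u : ℝ × ℝ := ((1 : ℝ), (0 : ℝ)) with hu
  set v : ℝ × ℝ := ((0 : ℝ), (1 : ℝ)) with hv
  -- helper: w = -w implies w = 0
  have half : ∀ w : ℝ × ℝ, w = -w → w = 0 := by
    rintro ⟨w1, w2⟩ h
    simp [Prod.ext_iff] at h ⊢
    constructor <;> linarith [h.1, h.2]
  -- right linearity for mul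
  have mar : ∀ x y z : ℝ × ℝ, A.mul x (y + z) = A.mul x y + A.mul x z := by
    intro x y z
    rw [A.mul_skew, A.mul_add_left, A.mul_skew y x, A.mul_skew z x]; abel
  have msr : ∀ (r : ℝ) (x y : ℝ × ℝ), A.mul x (r • y) = r • A.mul x y := by
    intro r x y
    rw [A.mul_skew, A.mul_smul_left, A.mul_skew y x, smul_neg, neg_neg]
  have sar : ∀ x y z : ℝ × ℝ, A.star x (y + z) = A.star x y + A.star x z := by
    intro x y z
    rw [A.star_skew, A.star_add_left, A.star_skew y x, A.star_skew z x]; abel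
  have ssr : ∀ (r : ℝ) (x y : ℝ × ℝ), A.star x (r • y) = r • A.star x y := by
    intro r x y
    rw [A.star_skew, A.star_smul_left, A.star_skew y x, smul_neg, neg_neg]
  have tar : ∀ x y z w : ℝ × ℝ, A.tri x y (z + w) = A.tri x y z + A.tri x y w := by
    intro x y z w
    rw [A.tri_skew, A.tri_add_snd, A.tri_skew x z y, A.tri_skew x w y]; abel
  have tsr : ∀ (r : ℝ) (x y z : ℝ × ℝ), A.tri x y (r • z) = r • A.tri x y z := by
    intro r x y z
    rw [A.tri_skew, A.tri_smul_snd, A.tri_skew x z y, smul_neg, neg_neg]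
  have muu : ∀ x : ℝ × ℝ, A.mul x x = 0 := fun x => half _ (A.mul_skew x x)
  have suu : ∀ x : ℝ × ℝ, A.star x x = 0 := fun x => half _ (A.star_skew x x)
  have tuu : ∀ x y : ℝ × ℝ, A.tri x y y = 0 := fun x y => half _ (A.tri_skew x y y)
  have hmvu : A.mul v u = -(a • u) := by rw [A.mul_skew, hmul]
  have hsvu : A.star v u = -(c • u + d • v) := by rw [A.star_skew, hstar]
  have htuvu : A.tri u v u = -(0 : ℝ × ℝ) := by rw [A.tri_skew, htu]
  have htvvu : A.tri v v u = -(k • u) := by rw [A.tri_skew, htv]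
  have ex : ∀ x : ℝ × ℝ, x = x.1 • u + x.2 • v := by
    rintro ⟨x1, x2⟩; simp [hu, hv, Prod.ext_iff]
  -- closed formulas
  have hm : ∀ x y : ℝ × ℝ, A.mul x y = ((x.1 * y.2 - x.2 * y.1) * a, 0) := by
    intro x y
    calc A.mul x y = A.mul (x.1 • u + x.2 • v) (y.1 • u + y.2 • v) := by
          rw [← ex x, ← ex y]
      _ = _ := by
          simp only [A.mul_add_left, mar, A.mul_smul_left, msr, hmul, hmvu,
            muu, smul_neg, smul_zero, smul_smul]
          simp only [hu, hv, Prod.smul_mk, Prod.mk_add_mk, Prod.neg_mk,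
            Prod.ext_iff, Prod.fst_add, Prod.snd_add, Prod.fst_neg, Prod.snd_neg,
            smul_eq_mul, smul_zero, mul_one, mul_zero, neg_zero, add_zero, zero_add, Prod.fst_zero, Prod.snd_zero]
          constructor <;> (try trivial) <;> ring
  have hs : ∀ x y : ℝ × ℝ,
      A.star x y = ((x.1 * y.2 - x.2 * y.1) * c, (x.1 * y.2 - x.2 * y.1) * d) := by
    intro x y
    calc A.star x y = A.star (x.1 • u + x.2 • v) (y.1 • u + y.2 • v) := by
          rw [← ex x, ← ex y]
      _ = _ := by
          simp only [A.star_add_left, sar, A.star_smul_left, ssr, hstar, hsvu,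
            suu, smul_neg, smul_zero, smul_add, smul_smul]
          simp only [hu, hv, Prod.smul_mk, Prod.mk_add_mk, Prod.neg_mk,
            Prod.ext_iff, Prod.fst_add, Prod.snd_add, Prod.fst_neg, Prod.snd_neg,
            smul_eq_mul, smul_zero, mul_one, mul_zero, neg_zero, add_zero, zero_add, Prod.fst_zero, Prod.snd_zero]
          constructor <;> ring
  have ht : ∀ x y z : ℝ × ℝ,
      A.tri x y z = (x.2 * (y.1 * z.2 - y.2 * z.1) * k, 0) := by
    intro x y z
    calc A.tri x y z = A.tri (x.1 • u + x.2 • v) (y.1 • u + y.2 • v)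
          (z.1 • u + z.2 • v) := by rw [← ex x, ← ex y, ← ex z]
      _ = _ := by
          simp only [A.tri_add_fst, A.tri_smul_fst, A.tri_add_snd, A.tri_smul_snd,
            tar, tsr, htu, htv, htuvu, htvvu, tuu, smul_neg, smul_zero, neg_zero,
            smul_smul]
          simp only [hu, hv, Prod.smul_mk, Prod.mk_add_mk, Prod.neg_mk,
            Prod.ext_iff, Prod.fst_add, Prod.snd_add, Prod.fst_neg, Prod.snd_neg,
            smul_eq_mul, smul_zero, mul_one, mul_zero, neg_zero, add_zero, zero_add, Prod.fst_zero, Prod.snd_zero, add_zero, zero_add]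
          constructor <;> (try trivial) <;> ring
  refine ⟨?_, ?_, ?_, ?_, ?_, ?_, ?_, ?_, ?_, ?_, ?_, ?_⟩ <;>
    intros <;>
    simp only [TripleAlg.term11, TripleAlg.term12, TripleAlg.term13, hm, hs, ht,
      Prod.mk_add_mk, Prod.mk_sub_mk, Prod.fst_add, Prod.snd_add, Prod.fst_sub,
      Prod.snd_sub, Prod.neg_mk, Prod.ext_iff, Prod.fst_zero, Prod.snd_zero,
      Prod.mk_eq_zero] <;>
    constructor <;> (try trivial) <;> ring
end
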